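/- The Leibniz algebra 𝔏₅ degenerates to 𝔏₄²: in 𝔏₅, the basis E₁ᵗ = t·e₁, E₂ᵗ = t·e₂, E₃ᵗ = ((t-1)/2)·e₁ + e₃ (for t ≠ 0) has structure constants that are polynomial in t and specialize at t = 0 to the structure constants of 𝔏₄². -/

import Mathlib

/-- Multiplication of `𝔏₅` on ℂ³ (basis `e₁,e₂,e₃` = indices `0,1,2`):
`e₁e₃ = 2e₁`, `e₂e₂ = e₁`, `e₂e₃ = e₂`, `e₃e₂ = -e₂`, `e₃e₃ = e₁`. -/
def mulL5 (x y : Fin 3 → ℂ) : Fin 3 → ℂ :=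
  ![2 * x 0 * y 2 + x 1 * y 1 + x 2 * y 2, x 1 * y 2 - x 2 * y 1, 0]

/-- Multiplication of `𝔏₄²` on ℂ³: `e₁e₃ = 2e₁`, `e₂e₃ = e₂`, `e₃e₂ = -e₂`,
`e₃e₃ = e₁`. -/
def mulL42 (x y : Fin 3 → ℂ) : Fin 3 → ℂ :=
  ![2 * x 0 * y 2 + x 2 * y 2, x 1 * y 2 - x 2 * y 1, 0]

/-- The parametrized basis `E₁ᵗ = t·e₁`, `E₂ᵗ = t·e₂`, `E₃ᵗ = ((t-1)/2)·e₁ + e₃`. -/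
noncomputable def E8 (t : ℂ) : Fin 3 → Fin 3 → ℂ := ![![t, 0, 0], ![0, t, 0], ![(t - 1) / 2, 0, 1]]

/-!
In the basis `Eᵢᵗ` the products of `𝔏₅` are `E₁E₃ = 2E₁`, `E₂E₂ = t·E₁`, `E₂E₃ = E₂`,
`E₃E₂ = -E₂`, `E₃E₃ = E₁`: the shift `((t-1)/2)·e₁` in `E₃ᵗ` absorbs the `t`-dependence of
`E₃E₃`, so only `E₂E₂` keeps a factor `t`, and it vanishes at `t = 0`, leaving `𝔏₄²`.
-/

open Polynomial

/-- `degenConst i j k` is the coefficient of `Eₖᵗ` in `Eᵢᵗ Eⱼᵗ`, as a polynomial in `t`. -/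
noncomputable def degenConst : Fin 3 → Fin 3 → Fin 3 → ℂ[X] :=
  ![![![0, 0, 0], ![0, 0, 0], ![2, 0, 0]],
    ![![0, 0, 0], ![X, 0, 0], ![0, 1, 0]],
    ![![0, 0, 0], ![0, -1, 0], ![1, 0, 0]]]

theorem det_E8 (t : ℂ) : (Matrix.of (E8 t)).det = t ^ 2 := by
  simp [Matrix.det_fin_three, E8, sq]

theorem linearIndependent_E8 {t : ℂ} (ht : t ≠ 0) : LinearIndependent ℂ (E8 t) := by
  refine (Matrix.linearIndependent_rows_iff_isUnit (A := Matrix.of (E8 t))).mpr ?_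
  rw [Matrix.isUnit_iff_isUnit_det, det_E8]
  exact (pow_ne_zero 2 ht).isUnit

theorem mulL5_E8 (t : ℂ) (i j : Fin 3) :
    mulL5 (E8 t i) (E8 t j) = ∑ k, (degenConst i j k).eval t • E8 t k := by
  fin_cases i <;> fin_cases j <;> funext k <;> fin_cases k <;>
    simp [mulL5, E8, degenConst, Fin.sum_univ_three]
  all_goals ring

theorem mulL42_single_single (i j : Fin 3) :
    mulL42 (Pi.single i 1) (Pi.single j 1) = fun k => (degenConst i j k).eval 0 := by
  fin_cases i <;> fin_cases j <;> funext k <;> fin_cases k <;>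
    simp [mulL42, degenConst]

/-- `𝔏₅` degenerates to `𝔏₄²`: for `t ≠ 0` the vectors `Eᵢᵗ` form a basis of ℂ³ in
which the structure constants of `𝔏₅` are polynomials in `t` specializing at `t = 0`
to the structure constants of `𝔏₄²`. -/
theorem stmt_8 : ∃ c : Fin 3 → Fin 3 → Fin 3 → Polynomial ℂ,
    (∀ t : ℂ, t ≠ 0 → LinearIndependent ℂ (E8 t) ∧
      ∀ i j, mulL5 (E8 t i) (E8 t j) = ∑ k, (c i j k).eval t • E8 t k) ∧
    (∀ i j, mulL42 (Pi.single i 1) (Pi.single j 1)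
      = ∑ k, (c i j k).eval 0 • (Pi.single k 1 : Fin 3 → ℂ)) :=
  ⟨degenConst, fun t ht => ⟨linearIndependent_E8 ht, mulL5_E8 t⟩,
    fun i j => (mulL42_single_single i j).trans (pi_eq_sum_univ' _)⟩
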